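/- arXiv:1009.4085 — 4 statements merged into one kernel-verified Lean document; each statement's English description precedes it below -/
import Mathlib

section
/- If f, g : [a,b] → ℝ with a, b ∈ [0,∞), a < b, g and f·g integrable on [a,b], f is s₁-convex and g is s₂-convex in the second sense on [a,b] for some fixed s₁, s₂ ∈ (0,1), then (1/(b-a)) ∫_a^b f(x)g(x) dx ≤ (1/(s₁+s₂+1))·(f(a)g(a)+f(b)g(b)) + B(s₁+1, s₂+1)·(f(a)g(b)+f(b)g(a)), where B denotes the Euler Beta function. -/
/-!
Taking `x = y` and `λ = 1/2` in the definition gives `F x ≤ 2 ^ (1 - s) * F x`, so for `s < 1` an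
`s`-convex function is nonnegative. After the substitution `x = t a + (1 - t) b` the product
`f x * g x` is therefore bounded by the product of the two convexity bounds, and integrating that
product over `[0, 1]` gives `1 / (s₁ + s₂ + 1)` for the diagonal terms and, after the reflection
`t ↦ 1 - t`, the Beta integral for both cross terms.
-/

open MeasureTheory Set

/-- `s`-convexity in the second sense. -/
def SConvexOn {E : Type*} [AddCommMonoid E] [Module ℝ E] (s : ℝ) (S : Set E) (F : E → ℝ) :
    Prop :=
  ∀ x ∈ S, ∀ y ∈ S, ∀ l ∈ Icc (0 : ℝ) 1, F (l • x + (1 - l) • y) ≤ l ^ s * F x + (1 - l) ^ s * F y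

namespace SConvexOn

variable {E : Type*} [AddCommMonoid E] [Module ℝ E] {s s₁ s₂ : ℝ} {S : Set E} {F f g : E → ℝ}

theorem nonneg (hF : SConvexOn s S F) (hs : s < 1) {x : E} (hx : x ∈ S) : 0 ≤ F x := by
  have h := hF x hx x hx (1 / 2) ⟨by norm_num, by norm_num⟩
  rw [← add_smul, show (1 / 2 : ℝ) + (1 - 1 / 2) = 1 by norm_num, one_smul,
    show (1 - 1 / 2 : ℝ) = 1 / 2 by norm_num] at h
  have hhalf : (1 / 2 : ℝ) < (1 / 2) ^ s := by
    simpa using Real.rpow_lt_rpow_of_exponent_gt (by norm_num : (0 : ℝ) < 1 / 2)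
      (by norm_num : (1 / 2 : ℝ) < 1) hs
  nlinarith

theorem apply_mul_apply_le (hf : SConvexOn s₁ S f) (hg : SConvexOn s₂ S g) (hs₁ : s₁ < 1)
    (hs₂ : s₂ < 1) (hS : Convex ℝ S) {x y : E} (hx : x ∈ S) (hy : y ∈ S) {l : ℝ}
    (hl : l ∈ Icc (0 : ℝ) 1) :
    f (l • x + (1 - l) • y) * g (l • x + (1 - l) • y) ≤
      (l ^ s₁ * f x + (1 - l) ^ s₁ * f y) * (l ^ s₂ * g x + (1 - l) ^ s₂ * g y) := by
  have hl' : 0 ≤ 1 - l := sub_nonneg.2 hl.2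
  refine mul_le_mul (hf x hx y hy l hl) (hg x hx y hy l hl)
    (hg.nonneg hs₂ (hS hx hy hl.1 hl' (add_sub_cancel l 1))) ?_
  exact add_nonneg (mul_nonneg (Real.rpow_nonneg hl.1 _) (hf.nonneg hs₁ hx))
    (mul_nonneg (Real.rpow_nonneg hl' _) (hf.nonneg hs₁ hy))

end SConvexOn

theorem IntervalIntegrable.comp_mul_add_one_sub_mul {E : Type*} [NormedAddCommGroup E]
    {F : ℝ → E} {a b : ℝ} (hF : IntervalIntegrable F volume a b) :
    IntervalIntegrable (fun t => F (t * a + (1 - t) * b)) volume 0 1 := by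
  rcases eq_or_ne a b with rfl | hab
  · simp only [← add_mul, add_sub_cancel, one_mul]
    exact intervalIntegrable_const
  have h := (hF.comp_add_right b).comp_mul_left (c := a - b)
  rw [div_self (sub_ne_zero.2 hab), sub_self, zero_div] at h
  simpa only [show ∀ t : ℝ, t * a + (1 - t) * b = (a - b) * t + b from fun t => by ring]
    using h.symm

namespace intervalIntegral

variable {E : Type*} [NormedAddCommGroup E] [NormedSpace ℝ E]

theorem integral_comp_one_sub_zero_one (φ : ℝ → E) :
    ∫ t in (0 : ℝ)..1, φ (1 - t) = ∫ t in (0 : ℝ)..1, φ t := by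
  simp

theorem inv_sub_smul_integral_eq_integral_comp_mul_add_one_sub_mul {a b : ℝ} (hab : a ≠ b)
    (F : ℝ → E) :
    (b - a)⁻¹ • ∫ x in a..b, F x = ∫ t in (0 : ℝ)..1, F (t * a + (1 - t) * b) := by
  have h := smul_integral_comp_mul_add (a := 0) (b := 1) F (a - b) b
  simp only [mul_zero, zero_add, mul_one, sub_add_cancel] at h
  rw [integral_symm, ← h, ← neg_smul, neg_sub, smul_smul,
    inv_mul_cancel₀ (sub_ne_zero.2 hab.symm), one_smul]
  congr 1 with t
  congr 1
  ring

end intervalIntegral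

theorem integral_rpow_zero_one {p : ℝ} (hp : -1 < p) :
    ∫ t in (0 : ℝ)..1, t ^ p = 1 / (p + 1) := by
  rw [integral_rpow (Or.inl hp), Real.one_rpow, Real.zero_rpow (by linarith), sub_zero]

theorem integral_rpow_add_mul_rpow_add {s₁ s₂ : ℝ} (hs₁ : 0 ≤ s₁) (hs₂ : 0 ≤ s₂)
    (A B C D : ℝ) :
    ∫ t in (0 : ℝ)..1, (t ^ s₁ * A + (1 - t) ^ s₁ * B) * (t ^ s₂ * C + (1 - t) ^ s₂ * D) =
      1 / (s₁ + s₂ + 1) * (A * C + B * D) +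
        (∫ t in (0 : ℝ)..1, t ^ s₁ * (1 - t) ^ s₂) * (A * D + B * C) := by
  have hexpand : EqOn
      (fun t : ℝ => (t ^ s₁ * A + (1 - t) ^ s₁ * B) * (t ^ s₂ * C + (1 - t) ^ s₂ * D))
      (fun t => (t ^ (s₁ + s₂) * (A * C) + (1 - t) ^ (s₁ + s₂) * (B * D)) +
        (t ^ s₁ * (1 - t) ^ s₂ * (A * D) + (1 - t) ^ s₁ * (1 - (1 - t)) ^ s₂ * (B * C)))
      (uIcc 0 1) := by
    intro t ht
    rw [uIcc_of_le zero_le_one] at ht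
    simp only [sub_sub_cancel, Real.rpow_add_of_nonneg ht.1 hs₁ hs₂,
      Real.rpow_add_of_nonneg (sub_nonneg.2 ht.2) hs₁ hs₂]
    ring
  have hsymm := intervalIntegral.integral_comp_one_sub_zero_one
    (fun t : ℝ => t ^ (s₁ + s₂) * (B * D))
  have hsymm' := intervalIntegral.integral_comp_one_sub_zero_one
    (fun t : ℝ => t ^ s₁ * (1 - t) ^ s₂ * (B * C))
  rw [intervalIntegral.integral_congr hexpand, intervalIntegral.integral_add,
    intervalIntegral.integral_add, intervalIntegral.integral_add, hsymm, hsymm',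
    intervalIntegral.integral_mul_const, intervalIntegral.integral_mul_const,
    intervalIntegral.integral_mul_const, intervalIntegral.integral_mul_const,
    integral_rpow_zero_one (by linarith)]
  · ring
  all_goals exact Continuous.intervalIntegrable (by fun_prop (disch := linarith)) _ _

theorem product_hadamard_sconvex_sconvex_general
    (a b s₁ s₂ : ℝ) (f g : ℝ → ℝ)
    (hab : a < b)
    (hs₁ : s₁ ∈ Set.Ioo (0:ℝ) 1) (hs₂ : s₂ ∈ Set.Ioo (0:ℝ) 1)
    (hfg : IntervalIntegrable (fun x => f x * g x) volume a b)
    (hfs : ∀ x ∈ Set.Icc a b, ∀ y ∈ Set.Icc a b, ∀ l ∈ Set.Icc (0:ℝ) 1,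
      f (l * x + (1 - l) * y) ≤ l ^ s₁ * f x + (1 - l) ^ s₁ * f y)
    (hgs : ∀ x ∈ Set.Icc a b, ∀ y ∈ Set.Icc a b, ∀ l ∈ Set.Icc (0:ℝ) 1,
      g (l * x + (1 - l) * y) ≤ l ^ s₂ * g x + (1 - l) ^ s₂ * g y) :
    (1 / (b - a)) * ∫ x in a..b, f x * g x ≤
      (1 / (s₁ + s₂ + 1)) * (f a * g a + f b * g b) +
        (∫ t in (0:ℝ)..1, t ^ ((s₁ + 1) - 1) * (1 - t) ^ ((s₂ + 1) - 1)) *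
          (f a * g b + f b * g a) := by
  have hf : SConvexOn s₁ (Icc a b) f := hfs
  have hg : SConvexOn s₂ (Icc a b) g := hgs
  have hs₁0 := hs₁.1.le
  have hs₂0 := hs₂.1.le
  calc 1 / (b - a) * ∫ x in a..b, f x * g x
      = ∫ t in (0:ℝ)..1, f (t * a + (1 - t) * b) * g (t * a + (1 - t) * b) := by
        rw [one_div, ← smul_eq_mul,
          intervalIntegral.inv_sub_smul_integral_eq_integral_comp_mul_add_one_sub_mul hab.ne]
    _ ≤ ∫ t in (0:ℝ)..1,
          (t ^ s₁ * f a + (1 - t) ^ s₁ * f b) * (t ^ s₂ * g a + (1 - t) ^ s₂ * g b) :=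
        intervalIntegral.integral_mono_on zero_le_one hfg.comp_mul_add_one_sub_mul
          (Continuous.intervalIntegrable (by fun_prop (disch := assumption)) _ _)
          fun t ht => hf.apply_mul_apply_le hg hs₁.2 hs₂.2 (convex_Icc a b)
            (left_mem_Icc.2 hab.le) (right_mem_Icc.2 hab.le) ht
    _ = _ := by
        rw [integral_rpow_add_mul_rpow_add hs₁0 hs₂0]
        simp only [add_sub_cancel_right]

theorem product_hadamard_sconvex_sconvex
    (a b s₁ s₂ : ℝ) (f g : ℝ → ℝ)
    (ha : 0 ≤ a) (hb : 0 ≤ b) (hab : a < b)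
    (hs₁ : s₁ ∈ Set.Ioo (0:ℝ) 1) (hs₂ : s₂ ∈ Set.Ioo (0:ℝ) 1)
    (hg : IntervalIntegrable g volume a b)
    (hfg : IntervalIntegrable (fun x => f x * g x) volume a b)
    (hfs : ∀ x ∈ Set.Icc a b, ∀ y ∈ Set.Icc a b, ∀ l ∈ Set.Icc (0:ℝ) 1,
      f (l * x + (1 - l) * y) ≤ l ^ s₁ * f x + (1 - l) ^ s₁ * f y)
    (hgs : ∀ x ∈ Set.Icc a b, ∀ y ∈ Set.Icc a b, ∀ l ∈ Set.Icc (0:ℝ) 1,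
      g (l * x + (1 - l) * y) ≤ l ^ s₂ * g x + (1 - l) ^ s₂ * g y) :
    (1 / (b - a)) * ∫ x in a..b, f x * g x ≤
      (1 / (s₁ + s₂ + 1)) * (f a * g a + f b * g b) +
        (∫ t in (0:ℝ)..1, t ^ ((s₁ + 1) - 1) * (1 - t) ^ ((s₂ + 1) - 1)) *
          (f a * g b + f b * g a) :=
  product_hadamard_sconvex_sconvex_general a b s₁ s₂ f g hab hs₁ hs₂ hfg hfs hgs
end

section
/- If f, g : Δ = [a,b]×[c,d] → [0,∞) are convex on the co-ordinates on Δ (a < b, c < d) with f·g integrable, then 4 f((a+b)/2,(c+d)/2) g((a+b)/2,(c+d)/2) ≤ (1/((b-a)(d-c))) ∫_a^b ∫_c^d f(x,y)g(x,y) dy dx + (5/36)L + (7/36)M + (2/9)N, where L, M, N are as follows: L = f(a,c)g(a,c)+f(b,c)g(b,c)+f(a,d)g(a,d)+f(b,d)g(b,d), M = f(a,c)g(a,d)+f(a,d)g(a,c)+f(b,c)g(b,d)+f(b,d)g(b,c)+f(b,c)g(a,c)+f(b,d)g(a,d)+f(a,c)g(b,c)+f(a,d)g(b,d), N = f(b,c)g(a,d)+f(b,d)g(a,c)+f(a,c)g(b,d)+f(a,d)g(b,c).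 -/
/-!
For nonnegative convex `u, v` on `[a, b]` write `M = u a * v a + u b * v b` and
`N = u a * v b + u b * v a`. Bounding `u` and `v` by their chords gives Pachpatte's inequality
`(∫ u v) / (b - a) ≤ M / 3 + N / 6`. Midpoint convexity gives
`4 u(m) v(m) ≤ (u x + u (a + b - x)) (v x + v (a + b - x))`; averaging over `x` and applying the
first inequality to `u` and the reflection of `v` gives
`2 u(m) v(m) ≤ (∫ u v) / (b - a) + M / 6 + N / 3`.

On the rectangle, apply the second inequality in `x` along the midline `y = (c + d) / 2`, then in
`y` along every vertical line and integrate over `x`. The first inequality bounds the integrals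
along the edges `y = c` and `y = d`, and midpoint convexity in `y` bounds the values at
`(a, (c + d) / 2)` and `(b, (c + d) / 2)` by the corner values.
-/

open MeasureTheory Set

theorem integral_chord_mul_chord (a b p q r s : ℝ) :
    ∫ x in a..b, ((b - x) * p + (x - a) * q) * ((b - x) * r + (x - a) * s) =
      (b - a) ^ 3 * ((p * r + q * s) / 3 + (p * s + q * r) / 6) := by
  have hF : ∀ x ∈ uIcc a b, HasDerivAt (fun x => (p * s + q * r) * ((x - a) ^ 2 * (b - a) / 2 -
      (x - a) ^ 3 / 3) - (b - x) ^ 3 * p * r / 3 + (x - a) ^ 3 * q * s / 3)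
      (((b - x) * p + (x - a) * q) * ((b - x) * r + (x - a) * s)) x := by
    intro x _
    have hxa := (hasDerivAt_id x).sub_const a
    have hbx := (hasDerivAt_id x).const_sub b
    exact ((((hxa.pow 2).mul_const (b - a) |>.div_const 2).sub ((hxa.pow 3).div_const 3)
      |>.const_mul (p * s + q * r)).sub ((hbx.pow 3).mul_const p |>.mul_const r |>.div_const 3)
      |>.add ((hxa.pow 3).mul_const q |>.mul_const s |>.div_const 3)).congr_deriv (by simp; ring)
  rw [intervalIntegral.integral_eq_sub_of_hasDerivAt hF
    (Continuous.intervalIntegrable (by fun_prop) _ _)]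
  ring

namespace ConvexOn

variable {a b : ℝ} {u v : ℝ → ℝ}

theorem mul_le_chord (hu : ConvexOn ℝ (Icc a b) u) {x : ℝ} (hx : x ∈ Icc a b) :
    (b - a) * u x ≤ (b - x) * u a + (x - a) * u b := by
  rcases hx.1.eq_or_lt with rfl | hax
  · linarith
  rcases hx.2.eq_or_lt with rfl | hxb
  · linarith
  exact hu.secant_mono_aux1 (left_mem_Icc.2 (hax.trans hxb).le)
    (right_mem_Icc.2 (hax.trans hxb).le) hax hxb

theorem intervalIntegrable_mul (hu : ConvexOn ℝ (Icc a b) u) (hv : ConvexOn ℝ (Icc a b) v)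
    (hab : a ≤ b) (hu0 : ∀ x ∈ Icc a b, 0 ≤ u x) (hv0 : ∀ x ∈ Icc a b, 0 ≤ v x) :
    IntervalIntegrable (fun x => u x * v x) volume a b := by
  rw [intervalIntegrable_iff_integrableOn_Ioo_of_le hab]
  have hcont : ContinuousOn (fun x => u x * v x) (Ioo a b) :=
    ((hu.subset Ioo_subset_Icc_self (convex_Ioo a b)).continuousOn isOpen_Ioo).mul
      ((hv.subset Ioo_subset_Icc_self (convex_Ioo a b)).continuousOn isOpen_Ioo)
  refine .of_bound measure_Ioo_lt_top (hcont.aestronglyMeasurable measurableSet_Ioo)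
    (max (u a) (u b) * max (v a) (v b)) ?_
  filter_upwards [ae_restrict_mem measurableSet_Ioo] with x hx
  have hx' := Ioo_subset_Icc_self hx
  have hx : x ∈ segment ℝ a b := segment_eq_Icc hab ▸ hx'
  rw [Real.norm_eq_abs, abs_of_nonneg (mul_nonneg (hu0 x hx') (hv0 x hx'))]
  exact mul_le_mul (hu.le_on_segment (left_mem_Icc.2 hab) (right_mem_Icc.2 hab) hx)
    (hv.le_on_segment (left_mem_Icc.2 hab) (right_mem_Icc.2 hab) hx) (hv0 x hx')
    ((hu0 a (left_mem_Icc.2 hab)).trans (le_max_left _ _))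

theorem integral_mul_le (hu : ConvexOn ℝ (Icc a b) u) (hv : ConvexOn ℝ (Icc a b) v)
    (hab : a < b) (hu0 : ∀ x ∈ Icc a b, 0 ≤ u x) (hv0 : ∀ x ∈ Icc a b, 0 ≤ v x) :
    (∫ x in a..b, u x * v x) / (b - a) ≤
      (u a * v a + u b * v b) / 3 + (u a * v b + u b * v a) / 6 := by
  have hpt : ∀ x ∈ Icc a b, (b - a) ^ 2 * (u x * v x) ≤
      ((b - x) * u a + (x - a) * u b) * ((b - x) * v a + (x - a) * v b) := fun x hx =>
    calc (b - a) ^ 2 * (u x * v x) = ((b - a) * u x) * ((b - a) * v x) := by ring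
      _ ≤ _ := mul_le_mul (hu.mul_le_chord hx) (hv.mul_le_chord hx)
          (mul_nonneg (sub_nonneg.2 hab.le) (hv0 x hx))
          ((mul_nonneg (sub_nonneg.2 hab.le) (hu0 x hx)).trans (hu.mul_le_chord hx))
  have hmono := intervalIntegral.integral_mono_on hab.le
    ((hu.intervalIntegrable_mul hv hab.le hu0 hv0).const_mul ((b - a) ^ 2))
    (Continuous.intervalIntegrable (by fun_prop) _ _) hpt
  rw [intervalIntegral.integral_const_mul, integral_chord_mul_chord] at hmono
  have hba : 0 < b - a := sub_pos.2 hab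
  rw [div_le_iff₀ hba]
  refine le_of_mul_le_mul_left ?_ (pow_pos hba 2)
  linear_combination hmono

theorem comp_reflect (hu : ConvexOn ℝ (Icc a b) u) :
    ConvexOn ℝ (Icc a b) (fun x => u (a + b - x)) := by
  have h := hu.comp_affineMap (AffineMap.const ℝ ℝ (a + b) - AffineMap.id ℝ ℝ)
  have hpre :
      ⇑(AffineMap.const ℝ ℝ (a + b) - AffineMap.id ℝ ℝ) ⁻¹' Icc a b = Icc a b := by
    ext x
    simp only [mem_preimage, AffineMap.coe_sub, AffineMap.coe_const, AffineMap.coe_id,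
      Pi.sub_apply, Function.const_apply, id_eq, mem_Icc]
    constructor <;> rintro ⟨h₁, h₂⟩ <;> constructor <;> linarith
  rw [hpre] at h
  exact h

theorem two_mul_le_add {s : Set ℝ} (hu : ConvexOn ℝ s u) {x y : ℝ} (hx : x ∈ s)
    (hy : y ∈ s) :
    2 * u ((x + y) / 2) ≤ u x + u y := by
  have h := hu.2 hx hy (by norm_num : (0 : ℝ) ≤ 1 / 2) (by norm_num : (0 : ℝ) ≤ 1 / 2)
    (by norm_num)
  simp only [smul_eq_mul] at h
  rw [show 1 / 2 * x + 1 / 2 * y = (x + y) / 2 by ring] at h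
  linarith

theorem four_mul_midpoint_mul_le {s : Set ℝ} (hu : ConvexOn ℝ s u) (hv : ConvexOn ℝ s v)
    (hu0 : ∀ x ∈ s, 0 ≤ u x) (hv0 : ∀ x ∈ s, 0 ≤ v x) {x y : ℝ} (hx : x ∈ s)
    (hy : y ∈ s) :
    4 * (u ((x + y) / 2) * v ((x + y) / 2)) ≤ (u x + u y) * (v x + v y) := by
  have hm : (x + y) / 2 ∈ s := by
    convert hu.1 hx hy (by norm_num : (0 : ℝ) ≤ 1 / 2) (by norm_num : (0 : ℝ) ≤ 1 / 2)
      (by norm_num) using 1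
    rw [smul_eq_mul, smul_eq_mul]; ring
  calc 4 * (u ((x + y) / 2) * v ((x + y) / 2))
      = (2 * u ((x + y) / 2)) * (2 * v ((x + y) / 2)) := by ring
    _ ≤ _ := mul_le_mul (hu.two_mul_le_add hx hy) (hv.two_mul_le_add hx hy)
        (mul_nonneg zero_le_two (hv0 _ hm)) (mul_nonneg zero_le_two (hu0 _ hm) |>.trans
          (hu.two_mul_le_add hx hy))

theorem two_mul_midpoint_mul_le (hu : ConvexOn ℝ (Icc a b) u) (hv : ConvexOn ℝ (Icc a b) v)
    (hab : a < b) (hu0 : ∀ x ∈ Icc a b, 0 ≤ u x) (hv0 : ∀ x ∈ Icc a b, 0 ≤ v x) :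
    2 * (u ((a + b) / 2) * v ((a + b) / 2)) ≤ (∫ x in a..b, u x * v x) / (b - a) +
      (u a * v a + u b * v b) / 6 + (u a * v b + u b * v a) / 3 := by
  have hreflect : ∀ x ∈ Icc a b, a + b - x ∈ Icc a b := fun x hx =>
    ⟨by linarith [hx.2], by linarith [hx.1]⟩
  have hv' := hv.comp_reflect
  have hv0' : ∀ x ∈ Icc a b, 0 ≤ v (a + b - x) := fun x hx => hv0 _ (hreflect x hx)
  -- `h x + h (a + b - x) = (u x + u (a + b - x)) * (v x + v (a + b - x))`, and `h` and its
  -- reflection have the same integral.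
  set h : ℝ → ℝ := fun x => u x * v x + u x * v (a + b - x) with h_def
  have hh : IntervalIntegrable h volume a b :=
    (hu.intervalIntegrable_mul hv hab.le hu0 hv0).add
      (hu.intervalIntegrable_mul hv' hab.le hu0 hv0')
  have hpt :
      ∀ x ∈ Icc a b, 4 * (u ((a + b) / 2) * v ((a + b) / 2)) ≤ h x + h (a + b - x) := by
    intro x hx
    have hmid := hu.four_mul_midpoint_mul_le hv hu0 hv0 hx (hreflect x hx)
    rw [show (x + (a + b - x)) / 2 = (a + b) / 2 by ring] at hmid
    simp only [h_def, sub_sub_cancel]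
    linear_combination hmid
  have hh' : IntervalIntegrable (fun x => h (a + b - x)) volume a b := by
    simpa using (hh.comp_sub_left (a + b)).symm
  have hmono :=
    intervalIntegral.integral_mono_on hab.le intervalIntegrable_const (hh.add hh') hpt
  rw [intervalIntegral.integral_const, intervalIntegral.integral_add hh hh',
    intervalIntegral.integral_comp_sub_left h,
    add_sub_cancel_left, add_sub_cancel_right, h_def,
    intervalIntegral.integral_add (hu.intervalIntegrable_mul hv hab.le hu0 hv0)
      (hu.intervalIntegrable_mul hv' hab.le hu0 hv0'), smul_eq_mul] at hmono
  have hcross := hu.integral_mul_le hv' hab hu0 hv0'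
  simp only [add_sub_cancel_left, add_sub_cancel_right] at hcross
  have hba : 0 < b - a := sub_pos.2 hab
  rw [div_le_iff₀ hba] at hcross
  rw [div_add' _ _ _ hba.ne', div_add' _ _ _ hba.ne', le_div_iff₀ hba]
  linear_combination hmono / 2 + hcross

end ConvexOn

theorem MeasureTheory.IntegrableOn.intervalIntegrable_intervalIntegral {a b c d : ℝ}
    {F : ℝ → ℝ → ℝ} (hab : a ≤ b) (hcd : c ≤ d)
    (hF : IntegrableOn (fun p : ℝ × ℝ => F p.1 p.2) (Icc a b ×ˢ Icc c d) volume) :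
    IntervalIntegrable (fun x => ∫ y in c..d, F x y) volume a b := by
  rw [intervalIntegrable_iff_integrableOn_Icc_of_le hab]
  simp only [intervalIntegral.integral_of_le hcd, ← integral_Icc_eq_integral_Ioc]
  rw [IntegrableOn, Measure.volume_eq_prod, ← Measure.prod_restrict] at hF
  exact hF.integral_prod_left

theorem integral_mul_midline_le {a b c d : ℝ} {f g : ℝ → ℝ → ℝ} (hab : a ≤ b)
    (hcd : c < d)
    (hf0 : ∀ x ∈ Icc a b, ∀ y ∈ Icc c d, 0 ≤ f x y)
    (hg0 : ∀ x ∈ Icc a b, ∀ y ∈ Icc c d, 0 ≤ g x y)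
    (hfx : ∀ y ∈ Icc c d, ConvexOn ℝ (Icc a b) (fun x => f x y))
    (hfy : ∀ x ∈ Icc a b, ConvexOn ℝ (Icc c d) (fun y => f x y))
    (hgx : ∀ y ∈ Icc c d, ConvexOn ℝ (Icc a b) (fun x => g x y))
    (hgy : ∀ x ∈ Icc a b, ConvexOn ℝ (Icc c d) (fun y => g x y))
    (hJ : IntervalIntegrable (fun x => ∫ y in c..d, f x y * g x y) volume a b) :
    2 * (∫ x in a..b, f x ((c + d) / 2) * g x ((c + d) / 2)) ≤
      (∫ x in a..b, ∫ y in c..d, f x y * g x y) / (d - c) +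
      ((∫ x in a..b, f x c * g x c) + ∫ x in a..b, f x d * g x d) / 6 +
      ((∫ x in a..b, f x c * g x d) + ∫ x in a..b, f x d * g x c) / 3 := by
  have hc : c ∈ Icc c d := left_mem_Icc.2 hcd.le
  have hd : d ∈ Icc c d := right_mem_Icc.2 hcd.le
  have hm : (c + d) / 2 ∈ Icc c d := ⟨by linarith, by linarith⟩
  have hsec : ∀ y ∈ Icc c d, ∀ y' ∈ Icc c d,
      IntervalIntegrable (fun x => f x y * g x y') volume a b := fun y hy y' hy' =>
    (hfx y hy).intervalIntegrable_mul (hgx y' hy') hab (hf0 · · y hy) (hg0 · · y' hy')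
  have hmono := intervalIntegral.integral_mono_on hab ((hsec _ hm _ hm).const_mul 2)
    (((hJ.div_const _).add (((hsec c hc c hc).add (hsec d hd d hd)).div_const 6)).add
      (((hsec c hc d hd).add (hsec d hd c hc)).div_const 3))
    fun x hx => (hfy x hx).two_mul_midpoint_mul_le (hgy x hx) hcd (hf0 x hx) (hg0 x hx)
  rwa [intervalIntegral.integral_const_mul, intervalIntegral.integral_add,
    intervalIntegral.integral_add, intervalIntegral.integral_div, intervalIntegral.integral_div,
    intervalIntegral.integral_div, intervalIntegral.integral_add,
    intervalIntegral.integral_add] at hmono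
  all_goals apply_rules [IntervalIntegrable.add, IntervalIntegrable.div_const, hsec]

theorem product_hadamard_coordinates_midpoint
    (a b c d : ℝ) (hab : a < b) (hcd : c < d) (f g : ℝ → ℝ → ℝ)
    (hf0 : ∀ x ∈ Set.Icc a b, ∀ y ∈ Set.Icc c d, 0 ≤ f x y)
    (hg0 : ∀ x ∈ Set.Icc a b, ∀ y ∈ Set.Icc c d, 0 ≤ g x y)
    (hfx : ∀ y ∈ Set.Icc c d, ConvexOn ℝ (Set.Icc a b) (fun x => f x y))
    (hfy : ∀ x ∈ Set.Icc a b, ConvexOn ℝ (Set.Icc c d) (fun y => f x y))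
    (hgx : ∀ y ∈ Set.Icc c d, ConvexOn ℝ (Set.Icc a b) (fun x => g x y))
    (hgy : ∀ x ∈ Set.Icc a b, ConvexOn ℝ (Set.Icc c d) (fun y => g x y))
    (hint : IntegrableOn (fun p : ℝ × ℝ => f p.1 p.2 * g p.1 p.2)
      (Set.Icc a b ×ˢ Set.Icc c d) volume) :
    4 * f ((a + b) / 2) ((c + d) / 2) * g ((a + b) / 2) ((c + d) / 2) ≤
      (1 / ((b - a) * (d - c))) * (∫ x in a..b, ∫ y in c..d, f x y * g x y) +
      (5 / 36) * (f a c * g a c + f b c * g b c + f a d * g a d + f b d * g b d) +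
      (7 / 36) * (f a c * g a d + f a d * g a c + f b c * g b d + f b d * g b c +
        f b c * g a c + f b d * g a d + f a c * g b c + f a d * g b d) +
      (2 / 9) * (f b c * g a d + f b d * g a c + f a c * g b d + f a d * g b c) := by
  have ha : a ∈ Icc a b := left_mem_Icc.2 hab.le
  have hb : b ∈ Icc a b := right_mem_Icc.2 hab.le
  have hc : c ∈ Icc c d := left_mem_Icc.2 hcd.le
  have hd : d ∈ Icc c d := right_mem_Icc.2 hcd.le
  have hm : (c + d) / 2 ∈ Icc c d := ⟨by linarith, by linarith⟩
  have hmidline :=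
    (hfx _ hm).two_mul_midpoint_mul_le (hgx _ hm) hab (hf0 · · _ hm) (hg0 · · _ hm)
  have hJ := hint.intervalIntegrable_intervalIntegral (F := fun x y => f x y * g x y) hab.le hcd.le
  have hinner := div_le_div_of_nonneg_right
    (integral_mul_midline_le hab.le hcd hf0 hg0 hfx hfy hgx hgy hJ) (sub_nonneg.2 hab.le)
  have hedge : ∀ y ∈ Icc c d, ∀ y' ∈ Icc c d, (∫ x in a..b, f x y * g x y') / (b - a) ≤
      (f a y * g a y' + f b y * g b y') / 3 + (f a y * g b y' + f b y * g a y') / 6 :=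
    fun y hy y' hy' =>
      (hfx y hy).integral_mul_le (hgx y' hy') hab (hf0 · · y hy) (hg0 · · y' hy')
  have hcorner : ∀ x ∈ Icc a b, ∀ x' ∈ Icc a b,
      4 * (f x ((c + d) / 2) * g x' ((c + d) / 2)) ≤ (f x c + f x d) * (g x' c + g x' d) :=
    fun x hx x' hx' =>
    (hfy x hx).four_mul_midpoint_mul_le (hgy x' hx') (hf0 x hx) (hg0 x' hx') hc hd
  rw [one_div, mul_inv]
  linear_combination 2 * hmidline + hinner + (1 / 6) * (hedge c hc c hc + hedge d hd d hd) +
    (1 / 3) * (hedge c hc d hd + hedge d hd c hc) +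
    (1 / 12) * (hcorner a ha a ha + hcorner b hb b hb) +
    (1 / 6) * (hcorner a ha b hb + hcorner b hb a ha)
end

section
/- Let f : Δ = [a,b]×[c,d] ⊂ [0,∞)² → [0,∞) be s₁-convex on the co-ordinates and g : Δ → [0,∞) be s₂-convex on the co-ordinates (in the second sense), with a < b, c < d, s₁, s₂ ∈ (0,1], and f·g integrable on Δ. Then (1/((b-a)(d-c))) ∫_a^b ∫_c^d f(x,y)g(x,y) dy dx ≤ (1/(s₁+s₂+1)²)·L + (B(s₁+1,s₂+1)/(s₁+s₂+1))·M + (B(s₁+1,s₂+1))²·N, where B is the Euler Beta function, L = f(a,c)g(a,c)+f(b,c)g(b,c)+f(a,d)g(a,d)+f(b,d)g(b,d), M = f(a,c)g(b,c)+f(b,c)g(a,c)+f(a,d)g(b,d)+f(b,d)g(a,d)+f(a,c)g(a,d)+f(b,c)g(b,d)+f(a,d)g(a,c)+f(b,d)g(b,c), and N = f(a,c)g(b,d)+f(b,c)g(a,d)+f(a,d)g(b,c)+f(b,d)g(a,c). -/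
open MeasureTheory Set intervalIntegral


private lemma PH.cont_rpow {p : ℝ} (hp : 0 < p) : Continuous fun x : ℝ => x ^ p :=
  Real.continuous_rpow_const hp.le

private lemma PH.sub_integral (F : ℝ → ℝ) {a b : ℝ} (hab : a < b) :
    (∫ x in a..b, F ((b - x) / (b - a))) = (b - a) * ∫ t in (0:ℝ)..1, F t := by
  have hba : b - a ≠ 0 := sub_ne_zero.2 hab.ne'
  have h : ∀ x : ℝ, (b - x) / (b - a) = (-(b - a)⁻¹) * x + b / (b - a) := by
    intro x; field_simp; ring
  have hc : (-(b - a)⁻¹) ≠ 0 := by simpa using inv_ne_zero hba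
  calc (∫ x in a..b, F ((b - x) / (b - a)))
      = ∫ x in a..b, F ((-(b - a)⁻¹) * x + b / (b - a)) := by simp only [h]
    _ = (-(b - a)⁻¹)⁻¹ • ∫ t in (-(b - a)⁻¹) * a + b / (b - a)..(-(b - a)⁻¹) * b + b / (b - a), F t :=
        intervalIntegral.integral_comp_mul_add F hc _
    _ = (b - a) * ∫ t in (0:ℝ)..1, F t := by
        have h1 : (-(b - a)⁻¹) * a + b / (b - a) = 1 := by field_simp; ring
        have h0 : (-(b - a)⁻¹) * b + b / (b - a) = 0 := by rw [div_eq_mul_inv]; ring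
        rw [h1, h0, intervalIntegral.integral_symm]
        simp only [smul_eq_mul, inv_neg, inv_inv]
        ring

private lemma PH.reflect (F : ℝ → ℝ) : (∫ t in (0:ℝ)..1, F (1 - t)) = ∫ t in (0:ℝ)..1, F t := by
  simpa using intervalIntegral.integral_comp_sub_left F 1

private lemma PH.int_rpow {p : ℝ} (hp : 0 < p) : (∫ t in (0:ℝ)..1, t ^ p) = 1 / (p + 1) := by
  rw [integral_rpow (Or.inl (by linarith))]
  rw [Real.one_rpow, Real.zero_rpow (by positivity)]
  ring


private lemma PH.cont_rpow1m {p : ℝ} (hp : 0 < p) : Continuous fun x : ℝ => (1 - x) ^ p :=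
  (PH.cont_rpow hp).comp (continuous_const.sub continuous_id)

private noncomputable def PH.lin (p A B : ℝ) : ℝ → ℝ := fun t => t ^ p * A + (1 - t) ^ p * B

private noncomputable def PH.combo (p q A B C D : ℝ) : ℝ → ℝ :=
  fun t => PH.lin p A B t * PH.lin q C D t

private lemma PH.lin_cont {p : ℝ} (hp : 0 < p) (A B : ℝ) : Continuous (PH.lin p A B) :=
  ((PH.cont_rpow hp).mul continuous_const).add ((PH.cont_rpow1m hp).mul continuous_const)

private lemma PH.combo_cont {p q : ℝ} (hp : 0 < p) (hq : 0 < q) (A B C D : ℝ) :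
    Continuous (PH.combo p q A B C D) :=
  (PH.lin_cont hp A B).mul (PH.lin_cont hq C D)

private lemma PH.int_tt {p q : ℝ} (hp : 0 < p) (hq : 0 < q) :
    (∫ t in (0:ℝ)..1, t ^ p * t ^ q) = 1 / (p + q + 1) := by
  have heq : Set.EqOn (fun t : ℝ => t ^ p * t ^ q) (fun t : ℝ => t ^ (p + q)) (Set.uIcc 0 1) := by
    intro t ht
    rw [Set.uIcc_of_le (by norm_num : (0:ℝ) ≤ 1)] at ht
    exact (Real.rpow_add' ht.1 (by positivity)).symm
  rw [intervalIntegral.integral_congr heq, PH.int_rpow (by linarith)]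

private lemma PH.int_mm {p q : ℝ} (hp : 0 < p) (hq : 0 < q) :
    (∫ t in (0:ℝ)..1, (1 - t) ^ p * (1 - t) ^ q) = 1 / (p + q + 1) := by
  have h1 : (∫ t in (0:ℝ)..1, (1 - t) ^ p * (1 - t) ^ q)
      = ∫ t in (0:ℝ)..1, (fun u : ℝ => u ^ p * u ^ q) (1 - t) := rfl
  rw [h1]; exact (PH.reflect _).trans (PH.int_tt hp hq)

private lemma PH.int_mt {p q : ℝ} (hp : 0 < p) (hq : 0 < q) :
    (∫ t in (0:ℝ)..1, (1 - t) ^ p * t ^ q) = ∫ t in (0:ℝ)..1, t ^ p * (1 - t) ^ q := by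
  have h1 : (∫ t in (0:ℝ)..1, (1 - t) ^ p * t ^ q)
      = ∫ t in (0:ℝ)..1, (fun u : ℝ => u ^ p * (1 - u) ^ q) (1 - t) := by
    apply intervalIntegral.integral_congr
    intro t _
    simp [sub_sub_cancel]
  rw [h1]; exact PH.reflect (fun u => u ^ p * (1 - u) ^ q)

private lemma PH.combo_integral {p q : ℝ} (hp : 0 < p) (hq : 0 < q) (A B C D : ℝ) :
    (∫ t in (0:ℝ)..1, PH.combo p q A B C D t)
      = (1 / (p + q + 1)) * (A * C + B * D)
        + (∫ t in (0:ℝ)..1, t ^ p * (1 - t) ^ q) * (A * D + B * C) := by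
  have i1 : IntervalIntegrable (fun t : ℝ => t ^ p * t ^ q * (A * C)) volume 0 1 :=
    (((PH.cont_rpow hp).mul (PH.cont_rpow hq)).mul continuous_const).intervalIntegrable 0 1
  have i2 : IntervalIntegrable (fun t : ℝ => t ^ p * (1 - t) ^ q * (A * D)) volume 0 1 :=
    (((PH.cont_rpow hp).mul (PH.cont_rpow1m hq)).mul continuous_const).intervalIntegrable 0 1
  have i3 : IntervalIntegrable (fun t : ℝ => (1 - t) ^ p * t ^ q * (B * C)) volume 0 1 :=
    (((PH.cont_rpow1m hp).mul (PH.cont_rpow hq)).mul continuous_const).intervalIntegrable 0 1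
  have i4 : IntervalIntegrable (fun t : ℝ => (1 - t) ^ p * (1 - t) ^ q * (B * D)) volume 0 1 :=
    (((PH.cont_rpow1m hp).mul (PH.cont_rpow1m hq)).mul continuous_const).intervalIntegrable 0 1
  have hsplit : (∫ t in (0:ℝ)..1, PH.combo p q A B C D t)
      = (∫ t in (0:ℝ)..1, t ^ p * t ^ q * (A * C))
        + ((∫ t in (0:ℝ)..1, t ^ p * (1 - t) ^ q * (A * D))
        + ((∫ t in (0:ℝ)..1, (1 - t) ^ p * t ^ q * (B * C))
        + (∫ t in (0:ℝ)..1, (1 - t) ^ p * (1 - t) ^ q * (B * D)))) := by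
    rw [intervalIntegral.integral_congr
      (g := fun t : ℝ => t ^ p * t ^ q * (A * C) + (t ^ p * (1 - t) ^ q * (A * D)
        + ((1 - t) ^ p * t ^ q * (B * C) + (1 - t) ^ p * (1 - t) ^ q * (B * D))))
      (fun t _ => by simp only [PH.combo, PH.lin]; ring)]
    rw [intervalIntegral.integral_add i1 (i2.add (i3.add i4)),
      intervalIntegral.integral_add i2 (i3.add i4), intervalIntegral.integral_add i3 i4]
  rw [hsplit, intervalIntegral.integral_mul_const, intervalIntegral.integral_mul_const,
    intervalIntegral.integral_mul_const, intervalIntegral.integral_mul_const,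
    PH.int_tt hp hq, PH.int_mm hp hq, PH.int_mt hp hq]
  ring


private noncomputable def PH.phi (p q fac fad fbc fbd gac gad gbc gbd : ℝ) (t l : ℝ) : ℝ :=
  PH.lin p (PH.lin p fac fad l) (PH.lin p fbc fbd l) t *
  PH.lin q (PH.lin q gac gad l) (PH.lin q gbc gbd l) t

private lemma PH.pointwise {a b c d s₁ s₂ : ℝ} (hab : a < b) (hcd : c < d)
    (hs1 : 0 < s₁) (hs2 : 0 < s₂) (f g : ℝ → ℝ → ℝ)
    (hf0 : ∀ x ∈ Set.Icc a b, ∀ y ∈ Set.Icc c d, 0 ≤ f x y)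
    (hg0 : ∀ x ∈ Set.Icc a b, ∀ y ∈ Set.Icc c d, 0 ≤ g x y)
    (hfx : ∀ y ∈ Set.Icc c d, ∀ u ∈ Set.Icc a b, ∀ v ∈ Set.Icc a b,
        ∀ l ∈ Set.Icc (0:ℝ) 1,
      f (l * u + (1 - l) * v) y ≤ l ^ s₁ * f u y + (1 - l) ^ s₁ * f v y)
    (hfy : ∀ x ∈ Set.Icc a b, ∀ u ∈ Set.Icc c d, ∀ v ∈ Set.Icc c d,
        ∀ l ∈ Set.Icc (0:ℝ) 1,
      f x (l * u + (1 - l) * v) ≤ l ^ s₁ * f x u + (1 - l) ^ s₁ * f x v)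
    (hgx : ∀ y ∈ Set.Icc c d, ∀ u ∈ Set.Icc a b, ∀ v ∈ Set.Icc a b,
        ∀ l ∈ Set.Icc (0:ℝ) 1,
      g (l * u + (1 - l) * v) y ≤ l ^ s₂ * g u y + (1 - l) ^ s₂ * g v y)
    (hgy : ∀ x ∈ Set.Icc a b, ∀ u ∈ Set.Icc c d, ∀ v ∈ Set.Icc c d,
        ∀ l ∈ Set.Icc (0:ℝ) 1,
      g x (l * u + (1 - l) * v) ≤ l ^ s₂ * g x u + (1 - l) ^ s₂ * g x v)
    {x y : ℝ} (hx : x ∈ Set.Icc a b) (hy : y ∈ Set.Icc c d) :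
    f x y * g x y ≤ PH.phi s₁ s₂ (f a c) (f a d) (f b c) (f b d) (g a c) (g a d) (g b c) (g b d)
      ((b - x) / (b - a)) ((d - y) / (d - c)) := by
  have hba : (0:ℝ) < b - a := sub_pos.2 hab
  have hdc : (0:ℝ) < d - c := sub_pos.2 hcd
  set t := (b - x) / (b - a) with hT
  set l := (d - y) / (d - c) with hL
  have htm : t ∈ Set.Icc (0:ℝ) 1 :=
    ⟨div_nonneg (by linarith [hx.2]) hba.le, (div_le_one hba).2 (by linarith [hx.1])⟩
  have hlm : l ∈ Set.Icc (0:ℝ) 1 :=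
    ⟨div_nonneg (by linarith [hy.2]) hdc.le, (div_le_one hdc).2 (by linarith [hy.1])⟩
  have hxeq : t * a + (1 - t) * b = x := by rw [hT]; field_simp; ring
  have hyeq : l * c + (1 - l) * d = y := by rw [hL]; field_simp; ring
  have ham : a ∈ Set.Icc a b := ⟨le_rfl, hab.le⟩
  have hbm : b ∈ Set.Icc a b := ⟨hab.le, le_rfl⟩
  have hcm : c ∈ Set.Icc c d := ⟨le_rfl, hcd.le⟩
  have hdm : d ∈ Set.Icc c d := ⟨hcd.le, le_rfl⟩
  have t1 : (0:ℝ) ≤ t ^ s₁ := Real.rpow_nonneg htm.1 _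
  have u1 : (0:ℝ) ≤ (1 - t) ^ s₁ := Real.rpow_nonneg (by linarith [htm.2]) _
  have t2 : (0:ℝ) ≤ t ^ s₂ := Real.rpow_nonneg htm.1 _
  have u2 : (0:ℝ) ≤ (1 - t) ^ s₂ := Real.rpow_nonneg (by linarith [htm.2]) _
  have l1 : (0:ℝ) ≤ l ^ s₁ := Real.rpow_nonneg hlm.1 _
  have m1 : (0:ℝ) ≤ (1 - l) ^ s₁ := Real.rpow_nonneg (by linarith [hlm.2]) _
  have l2 : (0:ℝ) ≤ l ^ s₂ := Real.rpow_nonneg hlm.1 _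
  have m2 : (0:ℝ) ≤ (1 - l) ^ s₂ := Real.rpow_nonneg (by linarith [hlm.2]) _
  have nfay : 0 ≤ f a y := hf0 a ham y hy
  have nfby : 0 ≤ f b y := hf0 b hbm y hy
  have ngay : 0 ≤ g a y := hg0 a ham y hy
  have ngby : 0 ≤ g b y := hg0 b hbm y hy
  have nfac : 0 ≤ f a c := hf0 a ham c hcm
  have nfad : 0 ≤ f a d := hf0 a ham d hdm
  have nfbc : 0 ≤ f b c := hf0 b hbm c hcm
  have nfbd : 0 ≤ f b d := hf0 b hbm d hdm
  have ngac : 0 ≤ g a c := hg0 a ham c hcm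
  have ngad : 0 ≤ g a d := hg0 a ham d hdm
  have ngbc : 0 ≤ g b c := hg0 b hbm c hcm
  have ngbd : 0 ≤ g b d := hg0 b hbm d hdm
  have h1 := hfx y hy a ham b hbm t htm
  rw [hxeq] at h1
  have h2 := hgx y hy a ham b hbm t htm
  rw [hxeq] at h2
  have h3 : f x y * g x y ≤
      (t ^ s₁ * f a y + (1 - t) ^ s₁ * f b y) * (t ^ s₂ * g a y + (1 - t) ^ s₂ * g b y) :=
    mul_le_mul h1 h2 (hg0 x hx y hy)
      (add_nonneg (mul_nonneg t1 nfay) (mul_nonneg u1 nfby))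
  have h4 := hfy a ham c hcm d hdm l hlm
  rw [hyeq] at h4
  have h5 := hfy b hbm c hcm d hdm l hlm
  rw [hyeq] at h5
  have h6 := hgy a ham c hcm d hdm l hlm
  rw [hyeq] at h6
  have h7 := hgy b hbm c hcm d hdm l hlm
  rw [hyeq] at h7
  have h8 : t ^ s₁ * f a y + (1 - t) ^ s₁ * f b y ≤
      t ^ s₁ * (l ^ s₁ * f a c + (1 - l) ^ s₁ * f a d)
        + (1 - t) ^ s₁ * (l ^ s₁ * f b c + (1 - l) ^ s₁ * f b d) :=
    add_le_add (mul_le_mul_of_nonneg_left h4 t1) (mul_le_mul_of_nonneg_left h5 u1)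
  have h9 : t ^ s₂ * g a y + (1 - t) ^ s₂ * g b y ≤
      t ^ s₂ * (l ^ s₂ * g a c + (1 - l) ^ s₂ * g a d)
        + (1 - t) ^ s₂ * (l ^ s₂ * g b c + (1 - l) ^ s₂ * g b d) :=
    add_le_add (mul_le_mul_of_nonneg_left h6 t2) (mul_le_mul_of_nonneg_left h7 u2)
  have hn1 : 0 ≤ t ^ s₂ * g a y + (1 - t) ^ s₂ * g b y :=
    add_nonneg (mul_nonneg t2 ngay) (mul_nonneg u2 ngby)
  have hn2 : 0 ≤ t ^ s₁ * (l ^ s₁ * f a c + (1 - l) ^ s₁ * f a d)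
      + (1 - t) ^ s₁ * (l ^ s₁ * f b c + (1 - l) ^ s₁ * f b d) :=
    add_nonneg (mul_nonneg t1 (add_nonneg (mul_nonneg l1 nfac) (mul_nonneg m1 nfad)))
      (mul_nonneg u1 (add_nonneg (mul_nonneg l1 nfbc) (mul_nonneg m1 nfbd)))
  simp only [PH.phi, PH.lin]
  exact h3.trans (mul_le_mul h8 h9 hn1 hn2)
private lemma PH.phi_inner {p q : ℝ} (hp : 0 < p) (hq : 0 < q)
    (fac fad fbc fbd gac gad gbc gbd t : ℝ) :
    (∫ l in (0:ℝ)..1, PH.phi p q fac fad fbc fbd gac gad gbc gbd t l)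
      = (1 / (p + q + 1)) * (PH.combo p q fac fbc gac gbc t + PH.combo p q fad fbd gad gbd t)
        + (∫ u in (0:ℝ)..1, u ^ p * (1 - u) ^ q) *
          (PH.combo p q fac fbc gad gbd t + PH.combo p q fad fbd gac gbc t) := by
  have heq : Set.EqOn (fun l => PH.phi p q fac fad fbc fbd gac gad gbc gbd t l)
      (PH.combo p q (PH.lin p fac fbc t) (PH.lin p fad fbd t)
        (PH.lin q gac gbc t) (PH.lin q gad gbd t)) (Set.uIcc 0 1) :=
    fun l _ => by simp only [PH.phi, PH.combo, PH.lin]; ring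
  rw [intervalIntegral.integral_congr heq, PH.combo_integral hp hq]
  simp only [PH.combo]
  try ring

private lemma PH.phi_cont_l {p q : ℝ} (hp : 0 < p) (hq : 0 < q)
    (fac fad fbc fbd gac gad gbc gbd t : ℝ) :
    Continuous fun l => PH.phi p q fac fad fbc fbd gac gad gbc gbd t l := by
  simp only [PH.phi, PH.lin]
  exact ((continuous_const.mul
      (((PH.cont_rpow hp).mul continuous_const).add ((PH.cont_rpow1m hp).mul continuous_const))).add
    (continuous_const.mul
      (((PH.cont_rpow hp).mul continuous_const).add ((PH.cont_rpow1m hp).mul continuous_const)))).mul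
    (((continuous_const.mul
      (((PH.cont_rpow hq).mul continuous_const).add ((PH.cont_rpow1m hq).mul continuous_const))).add
    (continuous_const.mul
      (((PH.cont_rpow hq).mul continuous_const).add ((PH.cont_rpow1m hq).mul continuous_const)))))

private lemma PH.Hf_integral {p q : ℝ} (hp : 0 < p) (hq : 0 < q)
    (K Bq fac fad fbc fbd gac gad gbc gbd : ℝ) :
    (∫ t in (0:ℝ)..1,
        (K * (PH.combo p q fac fbc gac gbc t + PH.combo p q fad fbd gad gbd t)
          + Bq * (PH.combo p q fac fbc gad gbd t + PH.combo p q fad fbd gac gbc t)))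
      = K * ((1 / (p + q + 1)) * (fac * gac + fbc * gbc)
            + (∫ u in (0:ℝ)..1, u ^ p * (1 - u) ^ q) * (fac * gbc + fbc * gac))
        + K * ((1 / (p + q + 1)) * (fad * gad + fbd * gbd)
            + (∫ u in (0:ℝ)..1, u ^ p * (1 - u) ^ q) * (fad * gbd + fbd * gad))
        + Bq * ((1 / (p + q + 1)) * (fac * gad + fbc * gbd)
            + (∫ u in (0:ℝ)..1, u ^ p * (1 - u) ^ q) * (fac * gbd + fbc * gad))
        + Bq * ((1 / (p + q + 1)) * (fad * gac + fbd * gbc)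
            + (∫ u in (0:ℝ)..1, u ^ p * (1 - u) ^ q) * (fad * gbc + fbd * gac)) := by
  have c11 := PH.combo_cont hp hq fac fbc gac gbc
  have c12 := PH.combo_cont hp hq fad fbd gad gbd
  have c21 := PH.combo_cont hp hq fac fbc gad gbd
  have c22 := PH.combo_cont hp hq fad fbd gac gbc
  have i1 : IntervalIntegrable
      (fun t => K * (PH.combo p q fac fbc gac gbc t + PH.combo p q fad fbd gad gbd t))
      MeasureTheory.volume 0 1 := (continuous_const.mul (c11.add c12)).intervalIntegrable 0 1
  have i2 : IntervalIntegrable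
      (fun t => Bq * (PH.combo p q fac fbc gad gbd t + PH.combo p q fad fbd gac gbc t))
      MeasureTheory.volume 0 1 := (continuous_const.mul (c21.add c22)).intervalIntegrable 0 1
  rw [intervalIntegral.integral_add i1 i2, intervalIntegral.integral_const_mul,
    intervalIntegral.integral_const_mul,
    intervalIntegral.integral_add (c11.intervalIntegrable 0 1) (c12.intervalIntegrable 0 1),
    intervalIntegral.integral_add (c21.intervalIntegrable 0 1) (c22.intervalIntegrable 0 1),
    PH.combo_integral hp hq, PH.combo_integral hp hq, PH.combo_integral hp hq,
    PH.combo_integral hp hq]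
  ring
private lemma PH.final_alg (dc ba S Bq fac fad fbc fbd gac gad gbc gbd : ℝ) :
    dc * (ba * ((1 / S) * ((1 / S) * (fac * gac + fbc * gbc) + Bq * (fac * gbc + fbc * gac))
        + (1 / S) * ((1 / S) * (fad * gad + fbd * gbd) + Bq * (fad * gbd + fbd * gad))
        + Bq * ((1 / S) * (fac * gad + fbc * gbd) + Bq * (fac * gbd + fbc * gad))
        + Bq * ((1 / S) * (fad * gac + fbd * gbc) + Bq * (fad * gbc + fbd * gac))))
      = ba * dc * (1 / S ^ 2 * (fac * gac + fbc * gbc + fad * gad + fbd * gbd)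
        + Bq / S * (fac * gbc + fbc * gac + fad * gbd + fbd * gad
            + fac * gad + fbc * gbd + fad * gac + fbd * gbc)
        + Bq ^ 2 * (fac * gbd + fbc * gad + fad * gbc + fbd * gac)) := by
  ring

theorem product_hadamard_coordinates_s1_s2
    (a b c d s₁ s₂ : ℝ) (ha : 0 ≤ a) (hc : 0 ≤ c) (hab : a < b) (hcd : c < d)
    (hs₁ : s₁ ∈ Set.Ioc (0:ℝ) 1) (hs₂ : s₂ ∈ Set.Ioc (0:ℝ) 1) (f g : ℝ → ℝ → ℝ)
    (hf0 : ∀ x ∈ Set.Icc a b, ∀ y ∈ Set.Icc c d, 0 ≤ f x y)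
    (hg0 : ∀ x ∈ Set.Icc a b, ∀ y ∈ Set.Icc c d, 0 ≤ g x y)
    (hfx : ∀ y ∈ Set.Icc c d, ∀ u ∈ Set.Icc a b, ∀ v ∈ Set.Icc a b,
        ∀ l ∈ Set.Icc (0:ℝ) 1,
      f (l * u + (1 - l) * v) y ≤ l ^ s₁ * f u y + (1 - l) ^ s₁ * f v y)
    (hfy : ∀ x ∈ Set.Icc a b, ∀ u ∈ Set.Icc c d, ∀ v ∈ Set.Icc c d,
        ∀ l ∈ Set.Icc (0:ℝ) 1,
      f x (l * u + (1 - l) * v) ≤ l ^ s₁ * f x u + (1 - l) ^ s₁ * f x v)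
    (hgx : ∀ y ∈ Set.Icc c d, ∀ u ∈ Set.Icc a b, ∀ v ∈ Set.Icc a b,
        ∀ l ∈ Set.Icc (0:ℝ) 1,
      g (l * u + (1 - l) * v) y ≤ l ^ s₂ * g u y + (1 - l) ^ s₂ * g v y)
    (hgy : ∀ x ∈ Set.Icc a b, ∀ u ∈ Set.Icc c d, ∀ v ∈ Set.Icc c d,
        ∀ l ∈ Set.Icc (0:ℝ) 1,
      g x (l * u + (1 - l) * v) ≤ l ^ s₂ * g x u + (1 - l) ^ s₂ * g x v)
    (hint : IntegrableOn (fun p : ℝ × ℝ => f p.1 p.2 * g p.1 p.2)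
      (Set.Icc a b ×ˢ Set.Icc c d) volume) :
    (1 / ((b - a) * (d - c))) * ∫ x in a..b, ∫ y in c..d, f x y * g x y ≤
      (1 / (s₁ + s₂ + 1) ^ 2) *
        (f a c * g a c + f b c * g b c + f a d * g a d + f b d * g b d) +
      ((∫ t in (0:ℝ)..1, t ^ ((s₁ + 1) - 1) * (1 - t) ^ ((s₂ + 1) - 1)) /
          (s₁ + s₂ + 1)) *
        (f a c * g b c + f b c * g a c + f a d * g b d + f b d * g a d +
          f a c * g a d + f b c * g b d + f a d * g a c + f b d * g b c) +
      (∫ t in (0:ℝ)..1, t ^ ((s₁ + 1) - 1) * (1 - t) ^ ((s₂ + 1) - 1)) ^ 2 *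
        (f a c * g b d + f b c * g a d + f a d * g b c + f b d * g a c) := by
  obtain ⟨hs1, hs1'⟩ := hs₁
  obtain ⟨hs2, hs2'⟩ := hs₂
  have hba : (0:ℝ) < b - a := sub_pos.2 hab
  have hdc : (0:ℝ) < d - c := sub_pos.2 hcd
  set μ := volume.restrict (Set.Icc a b) with hμ
  set ν := volume.restrict (Set.Icc c d) with hν
  set F : ℝ × ℝ → ℝ := fun p => f p.1 p.2 * g p.1 p.2 with hF
  set Φ : ℝ → ℝ → ℝ := fun x y =>
    PH.phi s₁ s₂ (f a c) (f a d) (f b c) (f b d) (g a c) (g a d) (g b c) (g b d)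
      ((b - x) / (b - a)) ((d - y) / (d - c)) with hΦ
  set K := (1:ℝ) / (s₁ + s₂ + 1) with hK
  set Bq := ∫ u in (0:ℝ)..1, u ^ s₁ * (1 - u) ^ s₂ with hBq
  set Hf : ℝ → ℝ := fun t =>
    K * (PH.combo s₁ s₂ (f a c) (f b c) (g a c) (g b c) t
        + PH.combo s₁ s₂ (f a d) (f b d) (g a d) (g b d) t)
      + Bq * (PH.combo s₁ s₂ (f a c) (f b c) (g a d) (g b d) t
        + PH.combo s₁ s₂ (f a d) (f b d) (g a c) (g b c) t) with hHf
  have hFprod : Integrable F (μ.prod ν) := by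
    rw [hμ, hν, Measure.prod_restrict]
    rwa [MeasureTheory.Measure.volume_eq_prod] at hint
  have ae_int : ∀ᵐ x ∂μ, Integrable (fun y => F (x, y)) ν := hFprod.prod_right_ae
  have ae_mem : ∀ᵐ x ∂μ, x ∈ Set.Icc a b := by
    rw [hμ]; exact ae_restrict_mem measurableSet_Icc
  have contΦ : ∀ x, Continuous fun y => Φ x y := by
    intro x
    simp only [hΦ]
    exact (PH.phi_cont_l hs1 hs2 _ _ _ _ _ _ _ _ _).comp
      ((continuous_const.sub continuous_id).div_const _)
  have intΦ : ∀ x, Integrable (fun y => Φ x y) ν := by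
    intro x; rw [hν]; exact (contΦ x).integrableOn_Icc
  have key : ∀ᵐ x ∂μ, (∫ y, F (x, y) ∂ν) ≤ ∫ y, Φ x y ∂ν := by
    filter_upwards [ae_int, ae_mem] with x hx1 hx2
    refine integral_mono_ae hx1 (intΦ x) ?_
    rw [hν]
    refine (ae_restrict_iff' measurableSet_Icc).2 (.of_forall fun y hy => ?_)
    exact PH.pointwise hab hcd hs1 hs2 f g hf0 hg0 hfx hfy hgx hgy hx2 hy
  have int1 : Integrable (fun x => ∫ y, F (x, y) ∂ν) μ := hFprod.integral_prod_left
  have hinner : ∀ x, (∫ y, Φ x y ∂ν) = (d - c) * Hf ((b - x) / (b - a)) := by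
    intro x
    have e1 : (∫ y, Φ x y ∂ν) = ∫ y in c..d, Φ x y := by
      rw [hν, intervalIntegral.integral_of_le hcd.le, ← integral_Icc_eq_integral_Ioc]
    have e2 : (∫ y in c..d, Φ x y) = (d - c) * ∫ l in (0:ℝ)..1,
        PH.phi s₁ s₂ (f a c) (f a d) (f b c) (f b d) (g a c) (g a d) (g b c) (g b d)
          ((b - x) / (b - a)) l := by
      simp only [hΦ]
      exact PH.sub_integral _ hcd
    rw [e1, e2, PH.phi_inner hs1 hs2]
    try simp only [hHf, hK, hBq]
  have contHf : Continuous Hf := by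
    rw [hHf]
    exact (continuous_const.mul ((PH.combo_cont hs1 hs2 _ _ _ _).add
        (PH.combo_cont hs1 hs2 _ _ _ _))).add
      (continuous_const.mul ((PH.combo_cont hs1 hs2 _ _ _ _).add
        (PH.combo_cont hs1 hs2 _ _ _ _)))
  have int2 : Integrable (fun x => ∫ y, Φ x y ∂ν) μ := by
    have : (fun x => ∫ y, Φ x y ∂ν) = fun x => (d - c) * Hf ((b - x) / (b - a)) :=
      funext hinner
    rw [this, hμ]
    exact (continuous_const.mul (contHf.comp
      ((continuous_const.sub continuous_id).div_const _))).integrableOn_Icc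
  have main := integral_mono_ae int1 int2 key
  have rhs_eval : (∫ x, (∫ y, Φ x y ∂ν) ∂μ)
      = (d - c) * ((b - a) * ∫ t in (0:ℝ)..1, Hf t) := by
    calc (∫ x, (∫ y, Φ x y ∂ν) ∂μ)
        = ∫ x, (d - c) * Hf ((b - x) / (b - a)) ∂μ := by rw [funext hinner]
      _ = ∫ x in a..b, (d - c) * Hf ((b - x) / (b - a)) := by
          rw [hμ, integral_Icc_eq_integral_Ioc, ← intervalIntegral.integral_of_le hab.le]
      _ = (d - c) * ∫ x in a..b, Hf ((b - x) / (b - a)) :=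
          intervalIntegral.integral_const_mul _ _
      _ = (d - c) * ((b - a) * ∫ t in (0:ℝ)..1, Hf t) := by rw [PH.sub_integral Hf hab]
  have hT : (∫ t in (0:ℝ)..1, Hf t)
      = K * (K * (f a c * g a c + f b c * g b c) + Bq * (f a c * g b c + f b c * g a c))
        + K * (K * (f a d * g a d + f b d * g b d) + Bq * (f a d * g b d + f b d * g a d))
        + Bq * (K * (f a c * g a d + f b c * g b d) + Bq * (f a c * g b d + f b c * g a d))
        + Bq * (K * (f a d * g a c + f b d * g b c) + Bq * (f a d * g b c + f b d * g a c)) := by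
    simp only [hHf]
    rw [PH.Hf_integral hs1 hs2]
    try simp only [← hK, ← hBq]
  have inner_cast : ∀ x, (∫ y in c..d, f x y * g x y) = ∫ y, F (x, y) ∂ν := by
    intro x
    rw [hν, intervalIntegral.integral_of_le hcd.le, ← integral_Icc_eq_integral_Ioc]
    try rfl
  have lhs_eq : (∫ x in a..b, ∫ y in c..d, f x y * g x y)
      = ∫ x, (∫ y, F (x, y) ∂ν) ∂μ := by
    simp only [inner_cast]
    rw [hμ, intervalIntegral.integral_of_le hab.le, ← integral_Icc_eq_integral_Ioc]
  rw [lhs_eq]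
  have hfinal : (∫ x, (∫ y, F (x, y) ∂ν) ∂μ)
      ≤ (d - c) * ((b - a) * (K * (K * (f a c * g a c + f b c * g b c) + Bq * (f a c * g b c + f b c * g a c))
        + K * (K * (f a d * g a d + f b d * g b d) + Bq * (f a d * g b d + f b d * g a d))
        + Bq * (K * (f a c * g a d + f b c * g b d) + Bq * (f a c * g b d + f b c * g a d))
        + Bq * (K * (f a d * g a c + f b d * g b c) + Bq * (f a d * g b c + f b d * g a c)))) := by
    rw [← hT]
    exact main.trans_eq rhs_eval
  have hBeq : (∫ t in (0:ℝ)..1, t ^ ((s₁ + 1) - 1) * (1 - t) ^ ((s₂ + 1) - 1)) = Bq := by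
    rw [hBq]
    simp only [add_sub_cancel_right]
  rw [hBeq, one_div ((b - a) * (d - c)), inv_mul_le_iff₀ (by positivity)]
  calc (∫ x, (∫ y, F (x, y) ∂ν) ∂μ)
      ≤ _ := hfinal
    _ = (b - a) * (d - c) *
        (1 / (s₁ + s₂ + 1) ^ 2 * (f a c * g a c + f b c * g b c + f a d * g a d + f b d * g b d) +
          Bq / (s₁ + s₂ + 1) *
            (f a c * g b c + f b c * g a c + f a d * g b d + f b d * g a d + f a c * g a d +
              f b c * g b d + f a d * g a c + f b d * g b c) +
          Bq ^ 2 * (f a c * g b d + f b c * g a d + f a d * g b c + f b d * g a c)) := by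
        rw [hK]
        exact PH.final_alg _ _ _ _ _ _ _ _ _ _ _ _
end

section
/- Let g : Δ = [a,b]×[c,d] ⊂ [0,∞)² → [0,∞) be s-convex in the second sense on the co-ordinates for some s ∈ (0,1], with a < b, c < d, and g integrable on Δ. Then (1/((b-a)(d-c))) ∫_a^b ∫_c^d g(x,y) dy dx ≤ (g(a,c)+g(b,c)+g(a,d)+g(b,d))/(s+1)². -/
/-!
Writing y = l c + (1 - l) d, s-convexity in the second variable bounds g(x, y) by
((d - y)/(d - c))^s g(x, c) + ((y - c)/(d - c))^s g(x, d), and since ∫₀¹ l^s dl = 1/(s + 1) the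
inner integral is at most (d - c)(g(x, c) + g(x, d))/(s + 1). Doing the same in x with the
function x ↦ g(x, c) + g(x, d), which is s-convex in x, gives the four corner values and a second
factor (b - a)/(s + 1).
-/

open MeasureTheory Set intervalIntegral

theorem intervalIntegral.integral_mono_on_of_nonneg {f g : ℝ → ℝ} {a b : ℝ} (hab : a ≤ b)
    (hg : IntervalIntegrable g volume a b) (hf : ∀ x ∈ Icc a b, 0 ≤ f x)
    (h : ∀ x ∈ Icc a b, f x ≤ g x) : ∫ x in a..b, f x ≤ ∫ x in a..b, g x := by
  by_cases hfi : IntervalIntegrable f volume a b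
  · exact integral_mono_on hab hfi hg h
  · rw [integral_undef hfi]
    exact integral_nonneg hab fun x hx => (hf x hx).trans (h x hx)

theorem integral_div_rpow {r s : ℝ} (hr : 0 < r) (hs : -1 < s) :
    ∫ u in (0:ℝ)..r, (u / r) ^ s = r / (s + 1) := by
  rw [integral_comp_div (fun u => u ^ s) hr.ne', zero_div, div_self hr.ne',
    integral_rpow (Or.inl hs), Real.one_rpow, Real.zero_rpow (by linarith), smul_eq_mul]
  ring

theorem integral_sub_div_sub_rpow_left {p q s : ℝ} (hpq : p < q) (hs : -1 < s) :
    ∫ y in p..q, ((y - p) / (q - p)) ^ s = (q - p) / (s + 1) := by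
  rw [integral_comp_sub_right (fun u => (u / (q - p)) ^ s), sub_self,
    integral_div_rpow (sub_pos.2 hpq) hs]

theorem integral_sub_div_sub_rpow_right {p q s : ℝ} (hpq : p < q) (hs : -1 < s) :
    ∫ y in p..q, ((q - y) / (q - p)) ^ s = (q - p) / (s + 1) := by
  rw [integral_comp_sub_left (fun u => (u / (q - p)) ^ s), sub_self,
    integral_div_rpow (sub_pos.2 hpq) hs]

theorem integral_le_of_le_rpow_combination {h : ℝ → ℝ} {p q s A B : ℝ} (hpq : p < q)
    (hs : -1 < s) (h0 : ∀ y ∈ Icc p q, 0 ≤ h y)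
    (hle : ∀ l ∈ Icc (0:ℝ) 1, h (l * p + (1 - l) * q) ≤ l ^ s * A + (1 - l) ^ s * B) :
    ∫ y in p..q, h y ≤ (q - p) / (s + 1) * (A + B) := by
  have hqp : 0 < q - p := sub_pos.2 hpq
  have hne : (q - p) / (s + 1) ≠ 0 := div_ne_zero hqp.ne' (by linarith)
  have hi₁ : IntervalIntegrable (fun y => ((q - y) / (q - p)) ^ s) volume p q :=
    intervalIntegrable_of_integral_ne_zero ((integral_sub_div_sub_rpow_right hpq hs).trans_ne hne)
  have hi₂ : IntervalIntegrable (fun y => ((y - p) / (q - p)) ^ s) volume p q :=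
    intervalIntegrable_of_integral_ne_zero ((integral_sub_div_sub_rpow_left hpq hs).trans_ne hne)
  calc ∫ y in p..q, h y
      ≤ ∫ y in p..q, (((q - y) / (q - p)) ^ s * A + ((y - p) / (q - p)) ^ s * B) := by
        refine integral_mono_on_of_nonneg hpq.le ((hi₁.mul_const A).add (hi₂.mul_const B)) h0
          fun y hy => ?_
        have hl : (q - y) / (q - p) ∈ Icc (0:ℝ) 1 :=
          ⟨div_nonneg (by linarith [hy.2]) hqp.le, (div_le_one hqp).2 (by linarith [hy.1])⟩
        have hcompl : 1 - (q - y) / (q - p) = (y - p) / (q - p) := by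
          field_simp; ring
        have hcomb : (q - y) / (q - p) * p + (y - p) / (q - p) * q = y := by
          field_simp; ring
        simpa only [hcompl, hcomb] using hle _ hl
    _ = (q - p) / (s + 1) * (A + B) := by
        rw [integral_add (hi₁.mul_const A) (hi₂.mul_const B),
          intervalIntegral.integral_mul_const, intervalIntegral.integral_mul_const,
          integral_sub_div_sub_rpow_left hpq hs, integral_sub_div_sub_rpow_right hpq hs]
        ring

theorem hadamard_coordinates_sconvex_general
    (a b c d s : ℝ) (hab : a < b) (hcd : c < d)
    (hs : s ∈ Set.Ioc (0:ℝ) 1) (g : ℝ → ℝ → ℝ)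
    (hg0 : ∀ x ∈ Set.Icc a b, ∀ y ∈ Set.Icc c d, 0 ≤ g x y)
    (hgx : ∀ y ∈ Set.Icc c d, ∀ u ∈ Set.Icc a b, ∀ v ∈ Set.Icc a b,
        ∀ l ∈ Set.Icc (0:ℝ) 1,
      g (l * u + (1 - l) * v) y ≤ l ^ s * g u y + (1 - l) ^ s * g v y)
    (hgy : ∀ x ∈ Set.Icc a b, ∀ u ∈ Set.Icc c d, ∀ v ∈ Set.Icc c d,
        ∀ l ∈ Set.Icc (0:ℝ) 1,
      g x (l * u + (1 - l) * v) ≤ l ^ s * g x u + (1 - l) ^ s * g x v) :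
    (1 / ((b - a) * (d - c))) * ∫ x in a..b, ∫ y in c..d, g x y ≤
      (g a c + g b c + g a d + g b d) / (s + 1) ^ 2 := by
  have hs' : -1 < s := by linarith [hs.1]
  have ha : a ∈ Icc a b := left_mem_Icc.2 hab.le
  have hb : b ∈ Icc a b := right_mem_Icc.2 hab.le
  have hc : c ∈ Icc c d := left_mem_Icc.2 hcd.le
  have hd : d ∈ Icc c d := right_mem_Icc.2 hcd.le
  have inner : ∀ x ∈ Icc a b, ∫ y in c..d, g x y ≤ (d - c) / (s + 1) * (g x c + g x d) :=
    fun x hx => integral_le_of_le_rpow_combination hcd hs' (hg0 x hx) (hgy x hx c hc d hd)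
  have outer : ∫ x in a..b, ∫ y in c..d, g x y ≤ (b - a) / (s + 1) *
      ((d - c) / (s + 1) * (g a c + g a d) + (d - c) / (s + 1) * (g b c + g b d)) := by
    refine integral_le_of_le_rpow_combination hab hs'
      (fun x hx => integral_nonneg hcd.le (hg0 x hx)) fun l hl => ?_
    have hx : l * a + (1 - l) * b ∈ Icc a b :=
      convex_Icc a b ha hb hl.1 (sub_nonneg.2 hl.2) (add_sub_cancel l 1)
    calc _ ≤ (d - c) / (s + 1) * (g (l * a + (1 - l) * b) c + g (l * a + (1 - l) * b) d) :=
          inner _ hx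
      _ ≤ (d - c) / (s + 1) * (l ^ s * (g a c + g a d) + (1 - l) ^ s * (g b c + g b d)) := by
          gcongr ?_ * ?_
          · exact div_nonneg (sub_nonneg.2 hcd.le) (by linarith)
          · linarith [hgx c hc a ha b hb l hl, hgx d hd a ha b hb l hl]
      _ = _ := by ring
  have hba : 0 < b - a := sub_pos.2 hab
  have hdc : 0 < d - c := sub_pos.2 hcd
  calc _ ≤ 1 / ((b - a) * (d - c)) * ((b - a) / (s + 1) *
        ((d - c) / (s + 1) * (g a c + g a d) + (d - c) / (s + 1) * (g b c + g b d))) :=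
        mul_le_mul_of_nonneg_left outer (by positivity)
    _ = _ := by field_simp; ring

theorem hadamard_coordinates_sconvex
    (a b c d s : ℝ) (ha : 0 ≤ a) (hc : 0 ≤ c) (hab : a < b) (hcd : c < d)
    (hs : s ∈ Set.Ioc (0:ℝ) 1) (g : ℝ → ℝ → ℝ)
    (hg0 : ∀ x ∈ Set.Icc a b, ∀ y ∈ Set.Icc c d, 0 ≤ g x y)
    (hgx : ∀ y ∈ Set.Icc c d, ∀ u ∈ Set.Icc a b, ∀ v ∈ Set.Icc a b,
        ∀ l ∈ Set.Icc (0:ℝ) 1,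
      g (l * u + (1 - l) * v) y ≤ l ^ s * g u y + (1 - l) ^ s * g v y)
    (hgy : ∀ x ∈ Set.Icc a b, ∀ u ∈ Set.Icc c d, ∀ v ∈ Set.Icc c d,
        ∀ l ∈ Set.Icc (0:ℝ) 1,
      g x (l * u + (1 - l) * v) ≤ l ^ s * g x u + (1 - l) ^ s * g x v)
    (hint : IntegrableOn (fun p : ℝ × ℝ => g p.1 p.2)
      (Set.Icc a b ×ˢ Set.Icc c d) volume) :
    (1 / ((b - a) * (d - c))) * ∫ x in a..b, ∫ y in c..d, g x y ≤
      (g a c + g b c + g a d + g b d) / (s + 1) ^ 2 :=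
  hadamard_coordinates_sconvex_general a b c d s hab hcd hs g hg0 hgx hgy
end
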